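/- Let a ∈ ℝ, a ≠ 0, and define v_{i+1} = (1 | a·cos(2iπ/3), a·sin(2iπ/3)) ∈ ℝ^{1,2} for i = 0,1,2, with the Minkowski form x·y = x₀y₀ − x₁y₁ − x₂y₂. Then v₁, v₂, v₃ are linearly independent, each v_i·v_i = 1 − a², and for i ≠ j, v_i·v_j = 1 + a²/2. In particular, if a > 2, then each v_i·v_i < 0 and each 2-dimensional span of two of the vectors is negative definite. -/

import Mathlib

/-!
For points `(1 | a cos θ, a sin θ)` the Minkowski product is `1 - a² cos (θ - φ)`, and two distinct
angles `2iπ/3` differ by an angle of cosine `-1/2`. So the Gram matrix of `v₁, v₂, v₃` is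
`(1 + a²/2) J - (3a²/2) I`, whose eigenvalues `3` and `-3a²/2` do not vanish: this gives linear
independence. For `a > 2` each principal `2 × 2` minor has `v_i·v_i < 0` and positive determinant
`(3a²/2)(a²/2 - 2)`, which is the criterion for negative definiteness on the span of a pair.
-/

/-- The Minkowski form on `ℝ^{1,n}`. -/
def mink (n : ℕ) (x y : Fin (n + 1) → ℝ) : ℝ :=
  x 0 * y 0 - ∑ i : Fin n, x i.succ * y i.succ

open Real

def minkForm (n : ℕ) : LinearMap.BilinForm ℝ (Fin (n + 1) → ℝ) :=
  LinearMap.mk₂ ℝ (mink n)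
    (fun x x' y => by simp only [mink, Pi.add_apply, add_mul, Finset.sum_add_distrib]; ring)
    (fun c x y => by
      simp only [mink, Pi.smul_apply, smul_eq_mul, mul_assoc, ← Finset.mul_sum]; ring)
    (fun x y y' => by simp only [mink, Pi.add_apply, mul_add, Finset.sum_add_distrib]; ring)
    (fun c x y => by
      simp only [mink, Pi.smul_apply, smul_eq_mul, mul_left_comm _ c, ← Finset.mul_sum]; ring)

@[simp]
lemma minkForm_apply (n : ℕ) (x y : Fin (n + 1) → ℝ) : minkForm n x y = mink n x y := rfl

lemma isSymm_minkForm (n : ℕ) : (minkForm n).IsSymm :=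
  ⟨fun x y => by simp only [minkForm_apply, mink, mul_comm]⟩

theorem LinearMap.BilinForm.linearIndependent_of_gram_eq_ite {K M ι : Type*} [Field K]
    [AddCommGroup M] [Module K M] [Fintype ι] [DecidableEq ι] (B : LinearMap.BilinForm K M)
    {v : ι → M} {α β : K} (hgram : ∀ i j, B (v i) (v j) = if i = j then β else α)
    (hβα : β ≠ α) (hdet : β + (Fintype.card ι - 1) * α ≠ 0) : LinearIndependent K v := by
  rw [Fintype.linearIndependent_iff]
  intro g hg
  have hrow : ∀ j, α * ∑ i, g i + (β - α) * g j = 0 := by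
    intro j
    have hpair := congrArg (fun w => B w (v j)) hg
    simp only [map_sum, map_smul, LinearMap.sum_apply, LinearMap.smul_apply, smul_eq_mul, hgram,
      map_zero, LinearMap.zero_apply] at hpair
    have hsplit : ∀ i, (g i * if i = j then β else α) =
        α * g i + (β - α) * if i = j then g i else 0 := by
      intro i; split_ifs <;> ring
    rw [← hpair, Finset.sum_congr rfl (fun i _ => hsplit i), Finset.sum_add_distrib,
      ← Finset.mul_sum, ← Finset.mul_sum, Finset.sum_ite_eq', if_pos (Finset.mem_univ j)]
  have hsum : ∑ i, g i = 0 := by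
    have htotal := Finset.sum_eq_zero (s := Finset.univ) (fun j _ => hrow j)
    rw [Finset.sum_add_distrib, Finset.sum_const, ← Finset.mul_sum, Finset.card_univ,
      nsmul_eq_mul] at htotal
    refine (mul_eq_zero.1 ?_).resolve_left hdet
    linear_combination htotal
  intro j
  have hj := hrow j
  rw [hsum, mul_zero, zero_add] at hj
  exact (mul_eq_zero.1 hj).resolve_left (sub_ne_zero.2 hβα)

theorem LinearMap.BilinForm.IsSymm.apply_neg_of_mem_span_pair {K M : Type*} [Field K]
    [LinearOrder K] [IsStrictOrderedRing K] [AddCommGroup M] [Module K M]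
    {B : LinearMap.BilinForm K M} (hB : B.IsSymm) {x y w : M} (hx : B x x < 0)
    (hxy : 0 < B x x * B y y - B x y ^ 2) (hw : w ∈ Submodule.span K {x, y}) (hw0 : w ≠ 0) :
    B w w < 0 := by
  obtain ⟨c, d, rfl⟩ := Submodule.mem_span_pair.1 hw
  have hexp : B (c • x + d • y) (c • x + d • y) =
      c ^ 2 * B x x + 2 * c * d * B x y + d ^ 2 * B y y := by
    simp only [map_add, map_smul, LinearMap.add_apply, LinearMap.smul_apply, smul_eq_mul,
      hB.eq y x]
    ring
  have hpos : 0 < (c * B x x + d * B x y) ^ 2 + d ^ 2 * (B x x * B y y - B x y ^ 2) := by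
    rcases eq_or_ne d 0 with rfl | hd
    · have hc : c ≠ 0 := by rintro rfl; simp at hw0
      simpa using pow_two_pos_of_ne_zero (mul_ne_zero hc hx.ne)
    · positivity
  refine neg_of_mul_pos_right ?_ hx.le
  rw [hexp]
  linear_combination hpos

lemma cos_two_mul_int_mul_pi_div_three {k : ℤ} (hk : ¬ 3 ∣ k) :
    cos (2 * k * π / 3) = -(1 / 2) := by
  have hcos : cos (2 * π / 3) = -(1 / 2) := by
    rw [show 2 * π / 3 = π - π / 3 by ring, cos_pi_sub, cos_pi_div_three]
  obtain ⟨q, hq | hq⟩ : ∃ q : ℤ, k = 3 * q + 1 ∨ k = 3 * q + 2 := ⟨k / 3, by omega⟩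
  · rw [hq, show 2 * ((3 * q + 1 : ℤ) : ℝ) * π / 3 = 2 * π / 3 + q * (2 * π) by push_cast; ring,
      cos_add_int_mul_two_pi, hcos]
  · rw [hq, show 2 * ((3 * q + 2 : ℤ) : ℝ) * π / 3 = -(2 * π / 3) + ((q + 1 : ℤ) : ℝ) * (2 * π) by
      push_cast; ring, cos_add_int_mul_two_pi, cos_neg, hcos]

noncomputable def circlePoint (a θ : ℝ) : Fin 3 → ℝ := ![1, a * cos θ, a * sin θ]

lemma mink_circlePoint (a θ φ : ℝ) :
    mink 2 (circlePoint a θ) (circlePoint a φ) = 1 - a ^ 2 * cos (θ - φ) := by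
  simp only [circlePoint, mink, Fin.isValue, Matrix.cons_val_zero, mul_one, Matrix.cons_val_succ,
    Fin.sum_univ_two, Matrix.cons_val_one, Matrix.cons_val_fin_one, cos_sub, sub_right_inj]
  ring

lemma mink_circlePoint_two_mul_pi_div_three (a : ℝ) (i j : Fin 3) :
    mink 2 (circlePoint a (2 * (i : ℕ) * π / 3)) (circlePoint a (2 * (j : ℕ) * π / 3)) =
      if i = j then 1 - a ^ 2 else 1 + a ^ 2 / 2 := by
  have hdiff : (2 * (i : ℕ) * π / 3 : ℝ) - 2 * (j : ℕ) * π / 3 =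
      2 * (((i : ℤ) - j : ℤ) : ℝ) * π / 3 := by
    push_cast; ring
  rw [mink_circlePoint, hdiff]
  split_ifs with hij
  · simp [hij]
  · have hdvd : ¬ 3 ∣ ((i : ℤ) - j) := by have := Fin.val_ne_of_ne hij; omega
    rw [cos_two_mul_int_mul_pi_div_three hdvd]
    ring

theorem stmt16 (a : ℝ) (ha : a ≠ 0)
    (v : Fin 3 → (Fin 3 → ℝ))
    (hv : ∀ i : Fin 3, v i =
      ![1, a * Real.cos (2 * (i : ℕ) * Real.pi / 3),
           a * Real.sin (2 * (i : ℕ) * Real.pi / 3)]) :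
    LinearIndependent ℝ v ∧
    (∀ i, mink 2 (v i) (v i) = 1 - a ^ 2) ∧
    (∀ i j, i ≠ j → mink 2 (v i) (v j) = 1 + a ^ 2 / 2) ∧
    (2 < a →
      (∀ i, mink 2 (v i) (v i) < 0) ∧
      (∀ i j, i ≠ j →
        ∀ w ∈ Submodule.span ℝ ({v i, v j} : Set (Fin 3 → ℝ)),
          w ≠ 0 → mink 2 w w < 0)) := by
  have hgram : ∀ i j, mink 2 (v i) (v j) = if i = j then 1 - a ^ 2 else 1 + a ^ 2 / 2 := by
    intro i j
    rw [hv, hv]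
    exact mink_circlePoint_two_mul_pi_div_three a i j
  have hdiag : ∀ i, mink 2 (v i) (v i) = 1 - a ^ 2 := fun i => by simpa using hgram i i
  have hoff : ∀ i j, i ≠ j → mink 2 (v i) (v j) = 1 + a ^ 2 / 2 := fun i j hij => by
    simpa [hij] using hgram i j
  have ha_sq_pos : 0 < a ^ 2 := by positivity
  refine ⟨(minkForm 2).linearIndependent_of_gram_eq_ite hgram (by intro h; linarith)
    (by rw [Fintype.card_fin]; ring_nf; norm_num), hdiag, hoff, fun ha2 => ?_⟩
  have hneg : 1 - a ^ 2 < 0 := by nlinarith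
  refine ⟨fun i => hdiag i ▸ hneg, fun i j hij w hw hw0 => ?_⟩
  refine (isSymm_minkForm 2).apply_neg_of_mem_span_pair (by simpa [hdiag] using hneg) ?_ hw hw0
  simp only [minkForm_apply, hdiag, hoff i j hij]
  have ha_sq_gt : 4 < a ^ 2 := by nlinarith
  nlinarith
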